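/- Let X and Y be positive heavy-tailed random variables (not necessarily independent) with concave natural scales h_X and h_Y respectively, where h_Y(0) = 0, h_Y(x) → ∞ as x → ∞, and suppose lim_{x→∞} h_X(x)/h_Y(x) = ∞. Then 1/2 ≤ liminf_{x→∞} R_{X+Y}(x)/h_Y(x) ≤ 1; in particular, there is a constant c ∈ [1, 2] such that c·h_Y is a natural scale of X+Y. -/

import Mathlib

/-!
Split `{X + Y > x} ⊆ {X > (1 - t) x} ∪ {Y > t x}`. Because `h_X / h_Y → ∞`, the first tail
decays faster than any power of `exp (-h_Y x)`, while concavity with `h_Y 0 = 0` gives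
`h_Y (t x) ≥ t h_Y x`, so the second is at most `exp (-(t² - o(1)) h_Y x)`. Hence
`R_{X+Y}(x) ≥ t² h_Y x - log 2` eventually, for every `t < 1`. Conversely `X ≥ 0` gives
`P(X + Y > x) ≥ P(Y > x)`, so `liminf R_{X+Y} / h_Y ≤ 1`: the liminf is exactly `1`.
-/

open MeasureTheory Filter Set Topology

lemma ConcaveOn.smul_le_apply_smul {𝕜 E β : Type*} [Ring 𝕜] [PartialOrder 𝕜]
    [IsOrderedAddMonoid 𝕜] [AddCommGroup E] [Module 𝕜 E] [AddCommMonoid β] [PartialOrder β]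
    [Module 𝕜 β] {s : Set E} {f : E → β} (hf : ConcaveOn 𝕜 s f) (h0s : (0 : E) ∈ s)
    (hf0 : f 0 = 0) {x : E} (hx : x ∈ s) {t : 𝕜} (ht0 : 0 ≤ t) (ht1 : t ≤ 1) :
    t • f x ≤ f (t • x) := by
  simpa [hf0] using hf.2 hx h0s ht0 (sub_nonneg.2 ht1) (add_sub_cancel t 1)

lemma le_exp_neg_of_le_neg_log {p t : ℝ} (hp : 0 ≤ p) (h : t ≤ -Real.log p) :
    p ≤ Real.exp (-t) := by
  rcases hp.eq_or_lt with rfl | hp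
  · positivity
  · exact (Real.log_le_iff_le_exp hp).1 (by linarith)

section LiminfDiv

variable {α : Type*} {l : Filter α} {f g : α → ℝ}

lemma eventually_mul_lt_of_lt_liminf_div {a : ℝ}
    (h : (a : EReal) < liminf (fun x => ((f x / g x : ℝ) : EReal)) l)
    (hg : ∀ᶠ x in l, 0 < g x) : ∀ᶠ x in l, a * g x < f x := by
  filter_upwards [eventually_lt_of_lt_liminf h, hg] with x hx hgx
  exact (lt_div_iff₀ hgx).1 (EReal.coe_lt_coe_iff.1 hx)

lemma one_le_liminf_div (C : ℝ) (hg : Tendsto g l atTop)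
    (h : ∀ᶠ s in 𝓝[<] 1, ∀ᶠ x in l, s * g x - C ≤ f x) :
    (1 : EReal) ≤ liminf (fun x => ((f x / g x : ℝ) : EReal)) l := by
  refine le_of_forall_lt_imp_le_of_dense fun c hc => ?_
  obtain ⟨b, hcb, hb1⟩ := EReal.lt_iff_exists_real_btwn.1 hc
  obtain ⟨s, hs, hbs, -⟩ := (h.and (Ioo_mem_nhdsLT (EReal.coe_lt_coe_iff.1 hb1))).exists
  refine hcb.le.trans (le_liminf_of_le (by isBoundedDefault) ?_)
  filter_upwards [hs, hg.eventually_gt_atTop 0, hg.eventually_ge_atTop (C / (s - b))]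
    with x hx hgx hCx
  have hC : C ≤ (s - b) * g x := (div_le_iff₀' (sub_pos.2 hbs)).1 hCx
  exact EReal.coe_le_coe_iff.2 ((le_div_iff₀ hgx).2 (by linarith))

lemma eventually_mul_le_of_tendsto_div_atTop {R : α → ℝ}
    (hR : 0 < liminf (fun x => ((R x / f x : ℝ) : EReal)) l)
    (hfg : Tendsto (fun x => f x / g x) l atTop) (hg : ∀ᶠ x in l, 0 < g x) (K : ℝ) :
    ∀ᶠ x in l, K * g x ≤ R x := by
  obtain ⟨c, hc0, hc⟩ := EReal.lt_iff_exists_real_btwn.1 hR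
  have hf : ∀ᶠ x in l, 0 < f x := by
    filter_upwards [hfg.eventually_gt_atTop 0, hg] with x hfgx hgx
    exact (div_pos_iff_of_pos_right hgx).1 hfgx
  filter_upwards [eventually_mul_lt_of_lt_liminf_div hc hf, hfg.eventually_ge_atTop (K / c), hg]
    with x hRx hKx hgx
  have : K ≤ c * (f x / g x) := (div_le_iff₀' (EReal.coe_pos.1 hc0)).1 hKx
  rw [mul_div_assoc', le_div_iff₀ hgx] at this
  linarith

end LiminfDiv

lemma eventually_mul_le_comp_mul {R h : ℝ → ℝ} (hh : ConcaveOn ℝ (Ici 0) h)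
    (h0 : h 0 = 0) {a t : ℝ} (ha : 0 ≤ a) (ht0 : 0 < t) (ht1 : t ≤ 1)
    (hR : ∀ᶠ y in atTop, a * h y ≤ R y) :
    ∀ᶠ x in atTop, a * t * h x ≤ R (t * x) := by
  filter_upwards [(tendsto_id.const_mul_atTop ht0).eventually hR, eventually_ge_atTop 0]
    with x hRx hx
  calc a * t * h x = a * (t • h x) := by rw [smul_eq_mul, mul_assoc]
    _ ≤ a * h (t • x) := by
      gcongr
      exact hh.smul_le_apply_smul self_mem_Ici h0 hx ht0.le ht1
    _ ≤ R (t * x) := hRx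

section TailRate

variable {Ω : Type*} [MeasurableSpace Ω] {μ : Measure Ω}

noncomputable def tailRate (μ : Measure Ω) (Z : Ω → ℝ) (x : ℝ) : ℝ :=
  -Real.log (μ.real {ω | Z ω > x})

lemma measureReal_gt_pos_of_tailRate_pos {Z : Ω → ℝ} {x : ℝ} (h : 0 < tailRate μ Z x) :
    0 < μ.real {ω | Z ω > x} := by
  -- `Real.log 0 = 0`: a null tail has rate `0`.
  refine measureReal_nonneg.lt_of_ne fun h0 => ?_
  simp [tailRate, ← h0] at h

variable [IsFiniteMeasure μ] {X Y : Ω → ℝ}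

lemma measureReal_gt_le_add (hX : ∀ ω, 0 ≤ X ω) (x : ℝ) :
    μ.real {ω | Y ω > x} ≤ μ.real {ω | (X + Y) ω > x} :=
  measureReal_mono fun ω (hω : Y ω > x) => show X ω + Y ω > x by linarith [hX ω]

lemma tailRate_add_le (hX : ∀ ω, 0 ≤ X ω) {x : ℝ} (hY : 0 < μ.real {ω | Y ω > x}) :
    tailRate μ (X + Y) x ≤ tailRate μ Y x :=
  neg_le_neg (Real.log_le_log hY (measureReal_gt_le_add hX x))

lemma sub_log_two_le_tailRate_add {a b t : ℝ} (hpos : 0 < μ.real {ω | (X + Y) ω > a + b})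
    (hX : t ≤ tailRate μ X a) (hY : t ≤ tailRate μ Y b) :
    t - Real.log 2 ≤ tailRate μ (X + Y) (a + b) := by
  have hsub : {ω | (X + Y) ω > a + b} ⊆ {ω | X ω > a} ∪ {ω | Y ω > b} := by
    intro ω hω
    by_contra h
    simp only [mem_ofPred_eq, mem_union, not_or, not_lt, Pi.add_apply] at h hω
    linarith
  have hle : μ.real {ω | (X + Y) ω > a + b} ≤ 2 * Real.exp (-t) :=
    calc μ.real {ω | (X + Y) ω > a + b}
        ≤ μ.real {ω | X ω > a} + μ.real {ω | Y ω > b} :=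
          (measureReal_mono hsub).trans (measureReal_union_le _ _)
      _ ≤ 2 * Real.exp (-t) := by
          linarith [le_exp_neg_of_le_neg_log measureReal_nonneg hX,
            le_exp_neg_of_le_neg_log measureReal_nonneg hY]
  have := Real.log_le_log hpos hle
  rw [Real.log_mul two_ne_zero (Real.exp_ne_zero _), Real.log_exp] at this
  unfold tailRate
  linarith

lemma eventually_mul_sub_log_two_le_tailRate_add {h : ℝ → ℝ} (hconc : ConcaveOn ℝ (Ici 0) h)
    (h0 : h 0 = 0) (hh : ∀ᶠ x in atTop, 0 ≤ h x)
    (hRX : ∀ K, ∀ᶠ x in atTop, K * h x ≤ tailRate μ X x)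
    (hRY : ∀ a < 1, ∀ᶠ x in atTop, a * h x ≤ tailRate μ Y x)
    (hpos : ∀ᶠ x in atTop, 0 < μ.real {ω | (X + Y) ω > x}) :
    ∀ᶠ s in 𝓝[<] 1, ∀ᶠ x in atTop, s * h x - Real.log 2 ≤ tailRate μ (X + Y) x := by
  filter_upwards [Ioo_mem_nhdsLT zero_lt_one] with s ⟨hs0, hs1⟩
  set t := Real.sqrt s
  have ht0 : 0 < t := Real.sqrt_pos.2 hs0
  have ht1 : t < 1 := (Real.sqrt_lt' one_pos).2 (by simpa using hs1)
  have htt : t * t = s := Real.mul_self_sqrt hs0.le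
  filter_upwards [eventually_mul_le_comp_mul hconc h0 (by positivity) (sub_pos.2 ht1)
      (sub_le_self 1 ht0.le) (hRX (1 / (1 - t))),
    eventually_mul_le_comp_mul hconc h0 ht0.le ht0 ht1.le (hRY t ht1), hpos, hh]
    with x hXx hYx hposx hhx
  have hx : (1 - t) * x + t * x = x := by ring
  have hXx' : s * h x ≤ tailRate μ X ((1 - t) * x) := by
    rw [one_div_mul_cancel (sub_pos.2 ht1).ne', one_mul] at hXx
    nlinarith
  calc s * h x - Real.log 2 ≤ tailRate μ (X + Y) ((1 - t) * x + t * x) :=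
        sub_log_two_le_tailRate_add (by rwa [hx]) hXx' (htt ▸ hYx)
    _ = tailRate μ (X + Y) x := by rw [hx]

end TailRate

theorem stmt8_general {Ω : Type*} [MeasurableSpace Ω] (μ : Measure Ω) [IsProbabilityMeasure μ]
    (X Y : Ω → ℝ) (hXpos : ∀ ω, 0 < X ω)
    (hX hY : ℝ → ℝ)
    (hYconc : ConcaveOn ℝ (Ici 0) hY)
    (hY0 : hY 0 = 0)
    (hYtop : Tendsto hY atTop atTop)
    (hXnat : Filter.liminf
        (fun x : ℝ => ((-Real.log (μ {ω | X ω > x}).toReal / hX x : ℝ) : EReal)) atTop = 1)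
    (hYnat : Filter.liminf
        (fun x : ℝ => ((-Real.log (μ {ω | Y ω > x}).toReal / hY x : ℝ) : EReal)) atTop = 1)
    (hratio : Tendsto (fun x => hX x / hY x) atTop atTop) :
    ((1 / 2 : ℝ) : EReal) ≤ Filter.liminf
        (fun x : ℝ =>
          ((-Real.log (μ {ω | X ω + Y ω > x}).toReal / hY x : ℝ) : EReal)) atTop ∧
    Filter.liminf
        (fun x : ℝ =>
          ((-Real.log (μ {ω | X ω + Y ω > x}).toReal / hY x : ℝ) : EReal)) atTop ≤ 1 ∧
    ∃ c ∈ Icc (1 : ℝ) 2,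
      Filter.liminf
        (fun x : ℝ =>
          ((-Real.log (μ {ω | X ω + Y ω > x}).toReal / (c * hY x) : ℝ) : EReal)) atTop
        = 1 := by
  have hRX1 : liminf (fun x => ((tailRate μ X x / hX x : ℝ) : EReal)) atTop = 1 := hXnat
  have hRY1 : liminf (fun x => ((tailRate μ Y x / hY x : ℝ) : EReal)) atTop = 1 := hYnat
  have hYpos : ∀ᶠ x in atTop, 0 < hY x := hYtop.eventually_gt_atTop 0
  have hRY : ∀ a < 1, ∀ᶠ x in atTop, a * hY x ≤ tailRate μ Y x := fun a ha =>
    (eventually_mul_lt_of_lt_liminf_div (hRY1 ▸ by exact_mod_cast ha) hYpos).mono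
      fun _ => le_of_lt
  have hRX : ∀ K, ∀ᶠ x in atTop, K * hY x ≤ tailRate μ X x :=
    eventually_mul_le_of_tendsto_div_atTop (hRX1 ▸ zero_lt_one) hratio hYpos
  have hYtail : ∀ᶠ x in atTop, 0 < μ.real {ω | Y ω > x} := by
    filter_upwards [hRY (1 / 2) (by norm_num), hYpos] with x hx hYx
    exact measureReal_gt_pos_of_tailRate_pos (by linarith)
  have hXnn : ∀ ω, 0 ≤ X ω := fun ω => (hXpos ω).le
  have upper : liminf (fun x => ((tailRate μ (X + Y) x / hY x : ℝ) : EReal)) atTop ≤ 1 :=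
    hRY1 ▸ liminf_le_liminf (by
      filter_upwards [hYtail, hYpos] with x hx hYx
      exact EReal.coe_le_coe_iff.2 (div_le_div_of_nonneg_right (tailRate_add_le hXnn hx) hYx.le))
  have lower : 1 ≤ liminf (fun x => ((tailRate μ (X + Y) x / hY x : ℝ) : EReal)) atTop :=
    one_le_liminf_div _ hYtop <| eventually_mul_sub_log_two_le_tailRate_add hYconc hY0
      (hYpos.mono fun _ => le_of_lt) hRX hRY
      (hYtail.mono fun x hx => hx.trans_le (measureReal_gt_le_add hXnn x))
  refine ⟨le_trans (by exact_mod_cast one_half_lt_one.le) lower, upper, 1,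
    ⟨le_rfl, one_le_two⟩, ?_⟩
  simp only [one_mul]
  exact le_antisymm upper lower

theorem stmt8 {Ω : Type*} [MeasurableSpace Ω] (μ : Measure Ω) [IsProbabilityMeasure μ]
    (X Y : Ω → ℝ) (hXpos : ∀ ω, 0 < X ω) (hYpos : ∀ ω, 0 < Y ω)
    (hXub : ∀ a > (0 : ℝ), 0 < μ {ω | X ω > a})
    (hYub : ∀ a > (0 : ℝ), 0 < μ {ω | Y ω > a})
    (hXheavy : ∀ s > (0 : ℝ), ∫⁻ ω, ENNReal.ofReal (Real.exp (s * X ω)) ∂μ = ⊤)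
    (hYheavy : ∀ s > (0 : ℝ), ∫⁻ ω, ENNReal.ofReal (Real.exp (s * Y ω)) ∂μ = ⊤)
    (hX hY : ℝ → ℝ)
    (hXconc : ConcaveOn ℝ (Ici 0) hX) (hYconc : ConcaveOn ℝ (Ici 0) hY)
    (hY0 : hY 0 = 0) (hYnn : ∀ x ≥ (0 : ℝ), 0 ≤ hY x)
    (hYtop : Tendsto hY atTop atTop)
    (hXnat : Filter.liminf
        (fun x : ℝ => ((-Real.log (μ {ω | X ω > x}).toReal / hX x : ℝ) : EReal)) atTop = 1)
    (hYnat : Filter.liminf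
        (fun x : ℝ => ((-Real.log (μ {ω | Y ω > x}).toReal / hY x : ℝ) : EReal)) atTop = 1)
    (hratio : Tendsto (fun x => hX x / hY x) atTop atTop) :
    ((1 / 2 : ℝ) : EReal) ≤ Filter.liminf
        (fun x : ℝ =>
          ((-Real.log (μ {ω | X ω + Y ω > x}).toReal / hY x : ℝ) : EReal)) atTop ∧
    Filter.liminf
        (fun x : ℝ =>
          ((-Real.log (μ {ω | X ω + Y ω > x}).toReal / hY x : ℝ) : EReal)) atTop ≤ 1 ∧
    ∃ c ∈ Icc (1 : ℝ) 2,
      Filter.liminf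
        (fun x : ℝ =>
          ((-Real.log (μ {ω | X ω + Y ω > x}).toReal / (c * hY x) : ℝ) : EReal)) atTop
        = 1 :=
  stmt8_general μ X Y hXpos hX hY hYconc hY0 hYtop hXnat hYnat hratio
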